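/- arXiv:math-ph/0404030 — 7 statements merged into one kernel-verified Lean document; each statement's English description precedes it below -/
import Mathlib

section
/- If T : C(X) → C(Y) is a unital linear bijection between the algebras of continuous complex-valued functions on compact Hausdorff spaces X and Y, and T is an isometry (with respect to the sup norms), then T is an algebra isomorphism. -/
/-!
A unital contraction `T : C(X, ℂ) → C(Y, ℂ)` is positive: the values of `f ≥ 0` lie in
`[0, 2‖f‖]`, which is the intersection of the discs centred at `‖f‖ + t i` passing through `0`,
and `T` keeps values in each such disc since `T (f - c) = T f - c` and `‖T‖ ≤ 1`. Applied to
`T` and `T⁻¹`, this makes `T` an order isomorphism, so its restriction to real functions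
preserves `⊔`. For each `y`, `f ↦ T f y` is then a unital lattice homomorphism `C(X, ℝ) → ℝ`,
which is evaluation at some `x`: the zero sets of the nonnegative functions it kills form a
directed family of nonempty compact sets. Hence `T f y = f x` for all `f`, and `T` is
multiplicative.
-/

open scoped ComplexOrder

namespace Complex

theorem forall_norm_sub_le_iff {z : ℂ} {r : ℝ} (hr : 0 ≤ r) :
    (∀ t : ℝ, ‖z - (r + t * I)‖ ≤ ‖(r + t * I : ℂ)‖) ↔ 0 ≤ z ∧ z ≤ 2 * r := by
  have hsq : ∀ t : ℝ, ‖z - (r + t * I)‖ ≤ ‖(r + t * I : ℂ)‖ ↔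
      (z.re - r) ^ 2 + (z.im - t) ^ 2 ≤ r ^ 2 + t ^ 2 := fun t => by
    rw [← sq_le_sq₀ (norm_nonneg _) (norm_nonneg _), Complex.sq_norm, Complex.sq_norm, normSq_apply,
      normSq_apply]
    simp only [sub_re, add_re, ofReal_re, mul_re, I_re, I_im, ofReal_im, sub_im, add_im, mul_im]
    ring_nf
  simp only [hsq, le_def, zero_re, zero_im, mul_re, mul_im, ofReal_re, ofReal_im, re_ofNat,
    im_ofNat, mul_zero, zero_mul, sub_zero, add_zero]
  constructor
  · intro h
    have him : z.im = 0 := by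
      by_contra hb
      have := h (-(r ^ 2 + 1) / (2 * z.im))
      have h2 : z.im * (-(r ^ 2 + 1) / (2 * z.im)) = -(r ^ 2 + 1) / 2 := by
        field_simp
      nlinarith [sq_nonneg (z.re - r), sq_nonneg z.im]
    have := h 0
    simp only [him] at this ⊢
    refine ⟨⟨?_, trivial⟩, ?_, trivial⟩ <;> nlinarith
  · rintro ⟨⟨hre, him⟩, hle, -⟩ t
    rw [← him]
    nlinarith

end Complex

namespace ContinuousMap

variable {X Y : Type*} [TopologicalSpace X] [CompactSpace X] [TopologicalSpace Y] [CompactSpace Y]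

theorem apply_le_two_mul_norm_of_nonneg {f : C(X, ℂ)} (hf : 0 ≤ f) (x : X) : f x ≤ 2 * ‖f‖ := by
  rw [Complex.eq_coe_norm_of_nonneg (le_def.mp hf x)]
  exact_mod_cast (f.norm_coe_le_norm x).trans (le_mul_of_one_le_left (norm_nonneg f) one_le_two)

theorem monotone_of_map_one_of_norm_le (T : C(X, ℂ) →ₗ[ℂ] C(Y, ℂ)) (hT1 : T 1 = 1)
    (hT : ∀ f, ‖T f‖ ≤ ‖f‖) : Monotone T := by
  suffices hpos : ∀ f, 0 ≤ f → 0 ≤ T f by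
    intro f g hfg
    simpa using hpos (g - f) (sub_nonneg.mpr hfg)
  intro f hf
  refine le_def.mpr fun y => ((Complex.forall_norm_sub_le_iff (norm_nonneg f)).mp fun t => ?_).1
  set w : ℂ := ‖f‖ + t * Complex.I
  have hTw : T (f - w • 1) y = T f y - w := by simp [hT1]
  calc ‖T f y - w‖ = ‖T (f - w • 1) y‖ := by rw [hTw]
    _ ≤ ‖f - w • 1‖ := ((T _).norm_coe_le_norm y).trans (hT _)
    _ ≤ ‖w‖ := (norm_le _ (norm_nonneg w)).mpr fun x => by
      simpa using ((Complex.forall_norm_sub_le_iff (norm_nonneg f)).mpr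
        ⟨le_def.mp hf x, apply_le_two_mul_norm_of_nonneg hf x⟩) t

end ContinuousMap

namespace ContinuousMap

variable {X : Type*} [TopologicalSpace X] {φ : C(X, ℝ) →ₗ[ℝ] ℝ}

theorem map_nonneg_of_map_sup (hsup : ∀ f g, φ (f ⊔ g) = φ f ⊔ φ g) {f : C(X, ℝ)}
    (hf : 0 ≤ f) : 0 ≤ φ f := by
  simpa [sup_eq_left.mpr hf] using hsup f 0

theorem map_abs_of_map_sup (hsup : ∀ f g, φ (f ⊔ g) = φ f ⊔ φ g) (f : C(X, ℝ)) :
    φ |f| = |φ f| := by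
  rw [abs_eq_max_neg, ← map_neg, ← hsup]
  rfl

variable [CompactSpace X]

theorem exists_apply_eq_zero_of_map_eq_zero (h1 : φ 1 = 1)
    (hsup : ∀ f g, φ (f ⊔ g) = φ f ⊔ φ g) {g : C(X, ℝ)} (hg : 0 ≤ g) (hφg : φ g = 0) :
    ∃ x, g x = 0 := by
  have : Nonempty X := by
    by_contra hX
    have := not_nonempty_iff.mp hX
    simp [Subsingleton.elim (1 : C(X, ℝ)) 0] at h1
  obtain ⟨x₀, -, hx₀⟩ :=
    isCompact_univ.exists_isMinOn Set.univ_nonempty g.continuous.continuousOn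
  have hmin : g x₀ ≤ φ g := by
    have hle : g x₀ • 1 ≤ g := le_def.mpr fun x => by simpa using hx₀ (Set.mem_univ x)
    have := map_nonneg_of_map_sup hsup (sub_nonneg.mpr hle)
    simpa [h1] using this
  exact ⟨x₀, le_antisymm (hφg ▸ hmin) (by simpa using le_def.mp hg x₀)⟩

theorem exists_eq_eval_of_map_sup (h1 : φ 1 = 1) (hsup : ∀ f g, φ (f ⊔ g) = φ f ⊔ φ g) :
    ∃ x, ∀ f, φ f = f x := by
  let N := {g : C(X, ℝ) // 0 ≤ g ∧ φ g = 0}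
  let Z : N → Set X := fun g => {x | g.1 x = 0}
  have hZ : (⋂ g, Z g).Nonempty := by
    have : Nonempty N := ⟨⟨0, le_rfl, map_zero φ⟩⟩
    refine IsCompact.nonempty_iInter_of_directed_nonempty_isCompact_isClosed Z ?_
      (fun g => exists_apply_eq_zero_of_map_eq_zero h1 hsup g.2.1 g.2.2)
      (fun g => (isClosed_eq g.1.continuous continuous_const).isCompact)
      (fun g => isClosed_eq g.1.continuous continuous_const)
    rintro ⟨g, hg, hφg⟩ ⟨h, hh, hφh⟩
    refine ⟨⟨g + h, add_nonneg hg hh, by simp [hφg, hφh]⟩, fun x hx => ?_, fun x hx => ?_⟩ <;>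
    · have hgx : 0 ≤ g x := by simpa using le_def.mp hg x
      have hhx : 0 ≤ h x := by simpa using le_def.mp hh x
      change g x + h x = 0 at hx
      change _ = (0 : ℝ)
      linarith
  obtain ⟨x, hx⟩ := hZ
  refine ⟨x, fun f => ?_⟩
  have hdist : |f - φ f • 1| ∈ {g : C(X, ℝ) | 0 ≤ g ∧ φ g = 0} :=
    ⟨abs_nonneg _, by simp [map_abs_of_map_sup hsup, h1]⟩
  have := Set.mem_iInter.mp hx ⟨_, hdist⟩
  change |f x - φ f • 1| = 0 at this
  rw [smul_eq_mul, mul_one, abs_eq_zero, sub_eq_zero] at this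
  exact this.symm

end ContinuousMap

namespace LinearMap

variable {X Y : Type*} [TopologicalSpace X] [TopologicalSpace Y]

local notation "ofRealC" => Complex.ofRealCLM.compLeftContinuous ℝ _

noncomputable def realRestrict (T : C(X, ℂ) →ₗ[ℂ] C(Y, ℂ)) : C(X, ℝ) →ₗ[ℝ] C(Y, ℝ) :=
  (Complex.reCLM.compLeftContinuous ℝ Y).toLinearMap ∘ₗ T.restrictScalars ℝ ∘ₗ
    (Complex.ofRealCLM.compLeftContinuous ℝ X).toLinearMap

theorem realRestrict_apply (T : C(X, ℂ) →ₗ[ℂ] C(Y, ℂ)) (f : C(X, ℝ)) (y : Y) :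
    T.realRestrict f y = (T (ofRealC f) y).re :=
  rfl

theorem map_ofReal_comp {T : C(X, ℂ) →ₗ[ℂ] C(Y, ℂ)} (hT : Monotone T) (f : C(X, ℝ)) :
    T (ofRealC f) = ofRealC (T.realRestrict f) := by
  have him : ∀ g : C(X, ℝ), 0 ≤ g → ∀ y, (T (ofRealC g) y).im = 0 := fun g hg y => by
    have h0 : (0 : C(X, ℂ)) ≤ ofRealC g :=
      ContinuousMap.le_def.mpr fun x => by simpa using ContinuousMap.le_def.mp hg x
    simpa using (Complex.nonneg_iff.mp (ContinuousMap.le_def.mp (map_zero T ▸ hT h0) y)).2.symm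
  ext y
  apply Complex.ext
  · rfl
  · rw [show (ofRealC (T.realRestrict f) y).im = 0 from Complex.ofReal_im _,
      ← posPart_sub_negPart f, map_sub, map_sub, ContinuousMap.sub_apply,
      Complex.sub_im, him _ (posPart_nonneg f), him _ (negPart_nonneg f), sub_zero]

theorem monotone_realRestrict {T : C(X, ℂ) →ₗ[ℂ] C(Y, ℂ)} (hT : Monotone T) :
    Monotone T.realRestrict := fun f g hfg => by
  have hle : ofRealC f ≤ ofRealC g :=
    ContinuousMap.le_def.mpr fun x => by simpa using ContinuousMap.le_def.mp hfg x
  exact ContinuousMap.le_def.mpr fun y => (Complex.le_def.mp (ContinuousMap.le_def.mp (hT hle) y)).1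

theorem realRestrict_one {T : C(X, ℂ) →ₗ[ℂ] C(Y, ℂ)} (hT1 : T 1 = 1) : T.realRestrict 1 = 1 := by
  ext y
  have h1 : ofRealC (1 : C(X, ℝ)) = 1 := by ext; simp
  simp [realRestrict_apply, h1, hT1]

theorem realRestrict_sup (E : C(X, ℂ) ≃ₗ[ℂ] C(Y, ℂ)) (hE : Monotone E) (hE' : Monotone E.symm)
    (f g : C(X, ℝ)) :
    E.toLinearMap.realRestrict (f ⊔ g) =
      E.toLinearMap.realRestrict f ⊔ E.toLinearMap.realRestrict g := by
  let e : C(X, ℝ) ≃ C(Y, ℝ) :=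
    { toFun := E.toLinearMap.realRestrict
      invFun := E.symm.toLinearMap.realRestrict
      left_inv := fun f => by ext x; simp [realRestrict_apply, ← map_ofReal_comp hE]
      right_inv := fun g => by ext y; simp [realRestrict_apply, ← map_ofReal_comp hE'] }
  exact (e.toOrderIso (monotone_realRestrict hE) (monotone_realRestrict hE')).map_sup f g

theorem apply_eq_of_realRestrict_apply {T : C(X, ℂ) →ₗ[ℂ] C(Y, ℂ)} (hT : Monotone T) {x : X}
    {y : Y} (hxy : ∀ f, T.realRestrict f y = f x) (h : C(X, ℂ)) : T h y = h x := by
  have hdecomp : h = ofRealC (Complex.reCLM.compLeftContinuous ℝ X h) +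
      Complex.I • ofRealC (Complex.imCLM.compLeftContinuous ℝ X h) := by
    ext1 x'; simp [mul_comm Complex.I, Complex.re_add_im]
  rw [hdecomp, map_add, map_smul, map_ofReal_comp hT, map_ofReal_comp hT]
  simp [hxy, mul_comm Complex.I, Complex.re_add_im]

end LinearMap

theorem LinearEquiv.map_mul_of_monotone {X Y : Type*} [TopologicalSpace X] [CompactSpace X]
    [TopologicalSpace Y] (E : C(X, ℂ) ≃ₗ[ℂ] C(Y, ℂ)) (hE1 : E 1 = 1) (hE : Monotone E)
    (hE' : Monotone E.symm) (f g : C(X, ℂ)) : E (f * g) = E f * E g := by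
  ext y
  obtain ⟨x, hx⟩ := ContinuousMap.exists_eq_eval_of_map_sup (φ :=
    (ContinuousMap.evalCLM ℝ y).toLinearMap ∘ₗ E.toLinearMap.realRestrict)
    (by simp [LinearMap.realRestrict_one hE1])
    (fun f g => by simp [LinearMap.realRestrict_sup E hE hE'])
  have hev : ∀ h, E h y = h x := LinearMap.apply_eq_of_realRestrict_apply hE hx
  rw [ContinuousMap.mul_apply, hev, hev, hev, ContinuousMap.mul_apply]

theorem banach_stone_isometry_general
    {X Y : Type*} [TopologicalSpace X] [CompactSpace X]
    [TopologicalSpace Y] [CompactSpace Y]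
    (T : C(X, ℂ) →ₗ[ℂ] C(Y, ℂ))
    (hbij : Function.Bijective T)
    (hunital : T 1 = 1)
    (hiso : ∀ f : C(X, ℂ), ‖T f‖ = ‖f‖) :
    ∀ f g : C(X, ℂ), T (f * g) = T f * T g := by
  let E := LinearEquiv.ofBijective T hbij
  have hmono : Monotone T :=
    ContinuousMap.monotone_of_map_one_of_norm_le T hunital fun f => (hiso f).le
  have hmono_symm : Monotone E.symm :=
    ContinuousMap.monotone_of_map_one_of_norm_le (E.symm : C(Y, ℂ) →ₗ[ℂ] C(X, ℂ))
      (by rw [LinearEquiv.coe_coe, LinearEquiv.symm_apply_eq]; exact hunital.symm)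
      fun g => by
        rw [LinearEquiv.coe_coe, ← hiso, show T (E.symm g) = g from E.apply_symm_apply g]
  exact E.map_mul_of_monotone hunital hmono hmono_symm

/-- Banach–Stone: a unital linear isometric bijection between `C(X, ℂ)` and `C(Y, ℂ)`
for compact Hausdorff `X`, `Y` is an algebra isomorphism (i.e. multiplicative). -/
theorem banach_stone_isometry
    {X Y : Type*} [TopologicalSpace X] [CompactSpace X] [T2Space X]
    [TopologicalSpace Y] [CompactSpace Y] [T2Space Y]
    (T : C(X, ℂ) →ₗ[ℂ] C(Y, ℂ))
    (hbij : Function.Bijective T)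
    (hunital : T 1 = 1)
    (hiso : ∀ f : C(X, ℂ), ‖T f‖ = ‖f‖) :
    ∀ f g : C(X, ℂ), T (f * g) = T f * T g :=
  banach_stone_isometry_general T hbij hunital hiso
end

section
/- If T : C(X) → C(Y) is a unital linear order isomorphism between the real algebras of continuous real-valued functions on compact Hausdorff spaces, then T is multiplicative, i.e., T(fg) = T(f)T(g) for all f, g. -/
/-- A unital linear order isomorphism between `C(X, ℝ)` and `C(Y, ℝ)` for compact
Hausdorff `X`, `Y` is multiplicative. -/
theorem banach_stone_order_iso
    {X Y : Type*} [TopologicalSpace X] [CompactSpace X] [T2Space X]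
    [TopologicalSpace Y] [CompactSpace Y] [T2Space Y]
    (T : C(X, ℝ) →ₗ[ℝ] C(Y, ℝ))
    (hbij : Function.Bijective T)
    (hunital : T 1 = 1)
    (horder : ∀ f : C(X, ℝ), 0 ≤ f ↔ 0 ≤ T f) :
    ∀ f g : C(X, ℝ), T (f * g) = T f * T g := by
  have hmono : ∀ f g : C(X, ℝ), f ≤ g ↔ T f ≤ T g := by
    intro f g
    rw [← sub_nonneg, ← sub_nonneg (b := T f), ← map_sub]
    exact horder _
  have hsup : ∀ f g : C(X, ℝ), T (f ⊔ g) = T f ⊔ T g := by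
    intro f g
    obtain ⟨h, hh⟩ := hbij.2 (T f ⊔ T g)
    apply le_antisymm
    · rw [← hh, ← hmono]
      apply sup_le
      · rw [hmono, hh]; exact le_sup_left
      · rw [hmono, hh]; exact le_sup_right
    · exact sup_le ((hmono _ _).1 le_sup_left) ((hmono _ _).1 le_sup_right)
  have hsq : ∀ f : C(X, ℝ), T (f * f) = T f * T f := by
    intro f
    ext y
    set a : ℝ := T f y with ha
    set M : ℝ := ‖f‖ + |a| with hM
    have hM0 : 0 ≤ M := by positivity
    set g : C(X, ℝ) := (f - a • 1) ⊔ (-(f - a • 1)) with hg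
    have hTg : T g y = 0 := by
      rw [hg, hsup, map_neg, map_sub, map_smul, hunital]
      simp [ContinuousMap.sup_apply, ← ha]
    have key : ∀ x : X, |f x * f x - a * a| ≤ M * g x := by
      intro x
      have hgx : g x = |f x - a| := by
        simp [hg, ContinuousMap.sup_apply, max_comm, abs_eq_max_neg]
      have hb : |f x| ≤ ‖f‖ := f.norm_coe_le_norm x
      rw [hgx]
      have : f x * f x - a * a = (f x - a) * (f x + a) := by ring
      rw [this, abs_mul]
      have h1 : |f x + a| ≤ M := by
        calc |f x + a| ≤ |f x| + |a| := abs_add_le _ _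
          _ ≤ M := by rw [hM]; linarith
      have := abs_nonneg (f x - a)
      calc |f x - a| * |f x + a| ≤ |f x - a| * M :=
            mul_le_mul_of_nonneg_left h1 this
        _ = M * |f x - a| := mul_comm _ _
    have h1 : f * f - (a * a) • 1 ≤ M • g := by
      rw [ContinuousMap.le_def]
      intro x
      have := key x
      have h := abs_le.1 this
      simp only [ContinuousMap.sub_apply, ContinuousMap.mul_apply,
        ContinuousMap.smul_apply, ContinuousMap.one_apply, smul_eq_mul, mul_one]
      linarith [h.2]
    have h2 : -(M • g) ≤ f * f - (a * a) • 1 := by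
      rw [ContinuousMap.le_def]
      intro x
      have h := abs_le.1 (key x)
      simp only [ContinuousMap.neg_apply, ContinuousMap.sub_apply,
        ContinuousMap.mul_apply, ContinuousMap.smul_apply,
        ContinuousMap.one_apply, smul_eq_mul, mul_one]
      linarith [h.1]
    have H1 := (hmono _ _).1 h1
    have H2 := (hmono _ _).1 h2
    rw [map_sub, map_smul, map_smul, hunital] at H1
    rw [map_sub, map_smul, hunital, map_neg, map_smul] at H2
    have E1 := ContinuousMap.le_def.mp H1 y
    have E2 := ContinuousMap.le_def.mp H2 y
    simp only [ContinuousMap.sub_apply, ContinuousMap.smul_apply,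
      ContinuousMap.one_apply, ContinuousMap.neg_apply, smul_eq_mul, mul_one,
      hTg, mul_zero] at E1 E2
    have : T (f * f) y = a * a := by linarith
    simpa [ContinuousMap.mul_apply, ← ha] using this
  intro f g
  have h := hsq (f + g)
  have expand : (f + g) * (f + g) = f * f + (f * g + (f * g + g * g)) := by ring
  rw [expand, map_add, map_add, map_add, hsq f, hsq g, map_add T f g] at h
  ext y
  have := congrArg (fun k : C(Y, ℝ) => k y) h
  simp only [ContinuousMap.add_apply, ContinuousMap.mul_apply] at this
  simp only [ContinuousMap.mul_apply]
  nlinarith [this]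
end

section
/- (Choi) If τ : A → B is a unital completely positive linear bijection between unital C*-algebras whose inverse is also completely positive, then τ is a *-isomorphism. -/
/-!
Complete positivity at level 2 applied to the positive matrix `[[1, a], [a*, a*a]]` gives both
`τ (a*) = (τ a)*` and the Kadison–Schwarz inequality `(τ a)* τ a ≤ τ (a* a)`. Applying the
inequality to `τ⁻¹` at `τ a` and pushing it back through the positive map `τ` gives the reverse
inequality, so `τ (a* a) = (τ a)* τ a`; polarization then yields `τ (a* b) = (τ a)* τ b`.
-/

/-- An element of a star ring is positive if it is of the form `b* b`. -/
def IsPosElem {R : Type*} [NonUnitalSemiring R] [StarRing R] (a : R) : Prop :=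
  ∃ b : R, a = star b * b

/-- A linear map between star algebras is completely positive if all of its matrix
amplifications map positive matrices to positive matrices. -/
def IsCPmap {A B : Type*} [NonUnitalSemiring A] [StarRing A] [Module ℂ A]
    [NonUnitalSemiring B] [StarRing B] [Module ℂ B] (τ : A →ₗ[ℂ] B) : Prop :=
  ∀ (n : ℕ) (a : Matrix (Fin n) (Fin n) A), IsPosElem a → IsPosElem (a.map τ)

open Matrix

lemma IsPosElem.nonneg {R : Type*} [NonUnitalSemiring R] [StarRing R] [PartialOrder R]
    [StarOrderedRing R] {a : R} (ha : IsPosElem a) : 0 ≤ a := by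
  obtain ⟨b, rfl⟩ := ha
  exact star_mul_self_nonneg b

lemma isPosElem_iff_nonneg {A : Type*} [CStarAlgebra A] [PartialOrder A] [StarOrderedRing A]
    {a : A} : IsPosElem a ↔ 0 ≤ a := by
  refine ⟨IsPosElem.nonneg, fun ha => ⟨CFC.sqrt a, ?_⟩⟩
  rw [(CFC.sqrt_nonneg a).isSelfAdjoint.star_eq, CFC.sqrt_mul_sqrt_self a ha]

lemma IsPosElem.star_dotProduct_mulVec_nonneg {R n : Type*} [NonUnitalRing R] [StarRing R]
    [PartialOrder R] [StarOrderedRing R] [Fintype n] {M : Matrix n n R} (hM : IsPosElem M)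
    (v : n → R) : 0 ≤ star v ⬝ᵥ M *ᵥ v := by
  obtain ⟨c, rfl⟩ := hM
  rw [star_eq_conjTranspose, ← mulVec_mulVec, dotProduct_mulVec, ← star_mulVec]
  exact dotProduct_star_self_nonneg _

lemma isPosElem_gram_one {A : Type*} [Semiring A] [StarRing A] (a : A) :
    IsPosElem !![1, a; star a, star a * a] :=
  ⟨!![1, a; 0, 0], by
    ext i j
    fin_cases i <;> fin_cases j <;> simp [Matrix.mul_apply, Fin.sum_univ_two]⟩

namespace IsCPmap

lemma isPosElem_map {A B : Type*} [NonUnitalSemiring A] [StarRing A] [Module ℂ A]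
    [NonUnitalSemiring B] [StarRing B] [Module ℂ B]
    {τ : A →ₗ[ℂ] B} (hτ : IsCPmap τ) {a : A} (ha : IsPosElem a) : IsPosElem (τ a) := by
  obtain ⟨w, rfl⟩ := ha
  obtain ⟨c, hc⟩ := hτ 1 (of fun _ _ => star w * w)
    ⟨of fun _ _ => w, by ext i j; simp [Matrix.mul_apply]⟩
  exact ⟨c 0 0, by simpa [Matrix.mul_apply] using congrFun (congrFun hc 0) 0⟩

lemma map_star {A B : Type*} [Semiring A] [StarRing A] [Module ℂ A]
    [NonUnitalSemiring B] [StarRing B] [Module ℂ B]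
    {τ : A →ₗ[ℂ] B} (hτ : IsCPmap τ) (a : A) : τ (star a) = star (τ a) := by
  obtain ⟨c, hc⟩ := hτ 2 _ (isPosElem_gram_one a)
  have hsa : star (!![1, a; star a, star a * a].map τ) = !![1, a; star a, star a * a].map τ := by
    rw [hc, star_mul, star_star]
  simpa using (congrFun (congrFun hsa 1) 0).symm

lemma star_map_mul_map_le {A B : Type*} [Semiring A] [StarRing A] [Module ℂ A]
    [Ring B] [StarRing B] [Module ℂ B] [PartialOrder B] [StarOrderedRing B]
    {τ : A →ₗ[ℂ] B} (h1 : τ 1 = 1) (hτ : IsCPmap τ) (a : A) :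
    star (τ a) * τ a ≤ τ (star a * a) := by
  have hq := (hτ 2 _ (isPosElem_gram_one a)).star_dotProduct_mulVec_nonneg ![-τ a, 1]
  simp only [dotProduct, mulVec, Fin.sum_univ_two, map_apply, of_apply, cons_val_zero,
    cons_val_one, h1, hτ.map_star, Pi.star_apply, star_neg, star_one, one_mul,
    mul_one, mul_neg, neg_mul] at hq
  rw [← sub_nonneg]
  convert hq using 1
  noncomm_ring

lemma monotone {A B : Type*} [CStarAlgebra A] [PartialOrder A] [StarOrderedRing A]
    [CStarAlgebra B] [PartialOrder B] [StarOrderedRing B] {τ : A →ₗ[ℂ] B} (hτ : IsCPmap τ) :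
    Monotone τ := fun x y hxy => by
  rw [← sub_nonneg, ← isPosElem_iff_nonneg] at hxy
  simpa using (hτ.isPosElem_map hxy).nonneg

end IsCPmap

lemma LinearMap.map_star_mul_of_map_star_mul_self {A B : Type*} [Ring A] [StarRing A]
    [Algebra ℂ A] [StarModule ℂ A] [Ring B] [StarRing B] [Algebra ℂ B] [StarModule ℂ B]
    (f : A →ₗ[ℂ] B)
    (hf : ∀ a, f (star a * a) = star (f a) * f a) (a b : A) :
    f (star a * b) = star (f a) * f b := by
  set D : A → A → B := fun a b => f (star a * b) - star (f a) * f b with hD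
  have hsymm : ∀ a b, D a b + D b a = 0 := fun a b => by
    have := sub_eq_zero.mpr (hf (a + b))
    simp only [star_add, add_mul, mul_add, map_add, hf a, hf b] at this
    rw [← this, hD]
    beta_reduce
    abel
  -- `D` is conjugate-linear in its first argument, so `hsymm` at `(a, I • b)` makes `D` symmetric.
  have hI : D a (Complex.I • b) + D (Complex.I • b) a = Complex.I • (D a b - D b a) := by
    simp only [hD, star_smul, Complex.star_def, Complex.conj_I, mul_smul_comm, smul_mul_assoc,
      map_smul, neg_smul, smul_sub, map_neg, neg_mul]
    abel
  have hanti : D a b = D b a := by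
    simpa [hsymm, Complex.I_ne_zero, sub_eq_zero] using hI.symm
  have h2 : (2 : ℂ) • D a b = 0 := by
    rw [two_smul]
    nth_rewrite 2 [hanti]
    exact hsymm a b
  exact sub_eq_zero.mp ((smul_eq_zero.mp h2).resolve_left two_ne_zero)

lemma LinearEquiv.map_star_mul_self_of_isCPmap {A B : Type*} [CStarAlgebra A] [PartialOrder A]
    [StarOrderedRing A] [CStarAlgebra B] [PartialOrder B] [StarOrderedRing B] (τ : A ≃ₗ[ℂ] B)
    (h1 : τ 1 = 1) (hτ : IsCPmap (τ : A →ₗ[ℂ] B)) (hτinv : IsCPmap (τ.symm : B →ₗ[ℂ] A))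
    (a : A) : τ (star a * a) = star (τ a) * τ a := by
  refine le_antisymm ?_ (hτ.star_map_mul_map_le h1 a)
  have h1' : τ.symm 1 = 1 := τ.symm_apply_eq.mpr h1.symm
  simpa using hτ.monotone (hτinv.star_map_mul_map_le h1' (τ a))

/-- Choi: a unital completely positive linear bijection between unital C*-algebras
whose inverse is also completely positive is a *-isomorphism. -/
theorem choi_cp_order_iso
    {A B : Type*}
    [NormedRing A] [StarRing A] [CStarRing A] [NormedAlgebra ℂ A]
    [StarModule ℂ A] [CompleteSpace A]
    [NormedRing B] [StarRing B] [CStarRing B] [NormedAlgebra ℂ B]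
    [StarModule ℂ B] [CompleteSpace B]
    (τ : A ≃ₗ[ℂ] B) (hτ1 : τ 1 = 1)
    (hτ : IsCPmap (τ : A →ₗ[ℂ] B)) (hτinv : IsCPmap (τ.symm : B →ₗ[ℂ] A)) :
    (∀ a b : A, τ (a * b) = τ a * τ b) ∧ (∀ a : A, τ (star a) = star (τ a)) := by
  let : CStarAlgebra A := { }
  let : CStarAlgebra B := { }
  let := CStarAlgebra.spectralOrder A
  let := CStarAlgebra.spectralOrder B
  have := CStarAlgebra.spectralOrderedRing A
  have := CStarAlgebra.spectralOrderedRing B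
  have hstar : ∀ a : A, τ (star a) = star (τ a) := hτ.map_star
  have hmul := (τ : A →ₗ[ℂ] B).map_star_mul_of_map_star_mul_self
    (τ.map_star_mul_self_of_isCPmap hτ1 hτ hτinv)
  refine ⟨fun a b => ?_, hstar⟩
  simpa [hstar] using hmul (star a) b
end

section
/- Let ω be a state on the tensor product A₁ ⊗ A₂ of unital C*-algebras (here take A_i = B(H_i) with H_i finite-dimensional). If the restriction r₁ω, defined by (r₁ω)(A) = ω(A ⊗ 1), is a pure state on A₁, then ω is a product state: ω(A ⊗ B) = (r₁ω)(A)(r₂ω)(B) for all A ∈ A₁, B ∈ A₂. -/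
open Matrix ComplexOrder
open scoped Kronecker

/-- A state on a matrix algebra: a unital positive linear functional. -/
def IsState {n : Type*} [Fintype n] [DecidableEq n]
    (φ : Matrix n n ℂ →ₗ[ℂ] ℂ) : Prop :=
  φ 1 = 1 ∧ ∀ a : Matrix n n ℂ, a.PosSemidef → 0 ≤ φ a

/-! For `0 ≤ B ≤ 1` the functionals `A ↦ ω (A ⊗ B)` and `A ↦ ω (A ⊗ (1 - B))` are positive and
add up to the pure state `r₁`, so each is a multiple of `r₁`, the factor being its value at `1`:
away from the degenerate cases, rescaling them gives two states of which `r₁` is a proper convex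
combination, and in the degenerate cases one of them vanishes at `1` and hence is zero, because
`‖ψ a‖ ≤ ‖ψ 1‖ ‖a‖` for a positive functional `ψ`. Thus `ω (A ⊗ B) = ω (A ⊗ 1) ω (1 ⊗ B)` for
all such `B`, and these span the matrix algebra. -/

section Functionals

variable {n : Type*}

def IsPositiveFunctional (φ : Matrix n n ℂ →ₗ[ℂ] ℂ) : Prop :=
  ∀ a : Matrix n n ℂ, a.PosSemidef → 0 ≤ φ a

theorem IsPositiveFunctional.smul {ψ : Matrix n n ℂ →ₗ[ℂ] ℂ} (hψ : IsPositiveFunctional ψ)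
    {c : ℝ} (hc : 0 ≤ c) : IsPositiveFunctional ((c : ℂ) • ψ) := fun a ha =>
  mul_nonneg (Complex.zero_le_real.mpr hc) (hψ a ha)

variable [Fintype n] [DecidableEq n]

open scoped MatrixOrder Matrix.Norms.L2Operator in
theorem IsPositiveFunctional.eq_zero_of_map_one_eq_zero {ψ : Matrix n n ℂ →ₗ[ℂ] ℂ}
    (hψ : IsPositiveFunctional ψ) (h1 : ψ 1 = 0) : ψ = 0 := by
  let ψp : Matrix n n ℂ →ₚ[ℂ] ℂ :=
    .mk₀ ψ fun a ha => hψ a (nonneg_iff_posSemidef.mp ha)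
  refine LinearMap.ext_on CStarAlgebra.span_nonneg fun a (ha : 0 ≤ a) => ?_
  have := ψp.norm_apply_le_of_nonneg a ha
  change ‖ψ a‖ ≤ ‖ψ 1‖ * ‖a‖ at this
  simpa [h1] using this

def IsPureState (r : Matrix n n ℂ →ₗ[ℂ] ℂ) : Prop :=
  IsState r ∧ ∀ φ₁ φ₂ : Matrix n n ℂ →ₗ[ℂ] ℂ, IsState φ₁ → IsState φ₂ →
    ∀ t : ℝ, 0 < t → t < 1 → r = (t : ℂ) • φ₁ + ((1 - t : ℝ) : ℂ) • φ₂ → φ₁ = φ₂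

theorem IsPureState.eq_smul_of_isPositiveFunctional_sub {r ψ : Matrix n n ℂ →ₗ[ℂ] ℂ}
    (hr : IsPureState r) (hψ : IsPositiveFunctional ψ) (hrψ : IsPositiveFunctional (r - ψ)) :
    ψ = ψ 1 • r := by
  obtain ⟨⟨hr1, -⟩, hpure⟩ := hr
  have hψ1 := hψ 1 PosSemidef.one
  obtain ⟨t, ht0, htψ⟩ : ∃ t : ℝ, 0 ≤ t ∧ ψ 1 = t :=
    ⟨_, (Complex.nonneg_iff.mp hψ1).1, Complex.eq_re_of_ofReal_le (by rwa [Complex.ofReal_zero])⟩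
  have ht1 : t ≤ 1 := by
    have := hrψ 1 PosSemidef.one
    rwa [LinearMap.sub_apply, hr1, htψ, ← Complex.ofReal_one, ← Complex.ofReal_sub,
      Complex.zero_le_real, sub_nonneg] at this
  rw [htψ]
  rcases ht0.eq_or_lt with rfl | ht0
  · simp [hψ.eq_zero_of_map_one_eq_zero (by simp [htψ])]
  rcases ht1.eq_or_lt with rfl | ht1
  · have : r - ψ = 0 := hrψ.eq_zero_of_map_one_eq_zero (by simp [hr1, htψ])
    simp [(sub_eq_zero.mp this).symm]
  have ht1' : 0 < 1 - t := sub_pos.mpr ht1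
  have hinv {s : ℝ} (hs : 0 < s) : (s : ℂ) * ((s⁻¹ : ℝ) : ℂ) = 1 := by
    rw [← Complex.ofReal_mul, mul_inv_cancel₀ hs.ne', Complex.ofReal_one]
  set φ₁ := ((t⁻¹ : ℝ) : ℂ) • ψ
  set φ₂ := (((1 - t)⁻¹ : ℝ) : ℂ) • (r - ψ)
  have hφ₁ : IsState φ₁ := ⟨by simp [φ₁, htψ, ht0.ne'], hψ.smul (inv_nonneg.mpr ht0.le)⟩
  have hφ₂ : IsState φ₂ :=
    ⟨by simp [φ₂, hr1, htψ, inv_mul_cancel₀ (by exact_mod_cast ht1'.ne' : (1 - t : ℂ) ≠ 0)],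
      hrψ.smul (inv_nonneg.mpr ht1'.le)⟩
  have hdecomp : r = (t : ℂ) • φ₁ + ((1 - t : ℝ) : ℂ) • φ₂ := by
    simp only [φ₁, φ₂, smul_smul, hinv ht0, hinv ht1', one_smul, add_sub_cancel]
  -- purity identifies `φ₂` with `φ₁`, and then `hdecomp` says `r = φ₁`
  rw [← hpure φ₁ φ₂ hφ₁ hφ₂ t ht0 ht1 hdecomp, ← add_smul, ← Complex.ofReal_add, add_sub_cancel,
    Complex.ofReal_one, one_smul] at hdecomp
  rw [hdecomp]
  simp only [φ₁, smul_smul, hinv ht0, one_smul]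

end Functionals

section Slices

variable {m n : Type*}

def leftSlice (ω : Matrix (m × n) (m × n) ℂ →ₗ[ℂ] ℂ) :
    Matrix n n ℂ →ₗ[ℂ] Matrix m m ℂ →ₗ[ℂ] ℂ :=
  (kroneckerBilinear (R := ℂ)).flip.compr₂ ω

@[simp]
theorem leftSlice_apply (ω : Matrix (m × n) (m × n) ℂ →ₗ[ℂ] ℂ) (B : Matrix n n ℂ)
    (A : Matrix m m ℂ) : leftSlice ω B A = ω (A ⊗ₖ B) :=
  rfl

variable [Fintype m] [Fintype n]

theorem IsPositiveFunctional.leftSlice {ω : Matrix (m × n) (m × n) ℂ →ₗ[ℂ] ℂ}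
    (hω : IsPositiveFunctional ω) {B : Matrix n n ℂ} (hB : B.PosSemidef) :
    IsPositiveFunctional (leftSlice ω B) := fun _ hA => hω _ (hA.kronecker hB)

variable [DecidableEq m] [DecidableEq n]

theorem IsState.leftSlice_one {ω : Matrix (m × n) (m × n) ℂ →ₗ[ℂ] ℂ} (hω : IsState ω) :
    IsState (leftSlice ω 1) :=
  ⟨by rw [leftSlice_apply, one_kronecker_one, hω.1],
    IsPositiveFunctional.leftSlice hω.2 PosSemidef.one⟩

theorem IsPureState.leftSlice_eq_smul {ω : Matrix (m × n) (m × n) ℂ →ₗ[ℂ] ℂ}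
    (hpure : IsPureState (leftSlice ω 1)) (hω : IsPositiveFunctional ω) {B : Matrix n n ℂ}
    (hB : B.PosSemidef) (hB1 : (1 - B).PosSemidef) :
    leftSlice ω B = ω (1 ⊗ₖ B) • leftSlice ω 1 :=
  hpure.eq_smul_of_isPositiveFunctional_sub (hω.leftSlice hB)
    (by rw [← map_sub]; exact hω.leftSlice hB1)

open scoped MatrixOrder Matrix.Norms.L2Operator in
theorem IsPureState.apply_kronecker {ω : Matrix (m × n) (m × n) ℂ →ₗ[ℂ] ℂ}
    (hpure : IsPureState (leftSlice ω 1)) (hω : IsPositiveFunctional ω)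
    (A : Matrix m m ℂ) (B : Matrix n n ℂ) :
    ω (A ⊗ₖ B) = ω (A ⊗ₖ 1) * ω (1 ⊗ₖ B) := by
  suffices (leftSlice ω).flip A = ω (A ⊗ₖ 1) • (leftSlice ω).flip 1 from
    LinearMap.congr_fun this B
  refine LinearMap.ext_on CStarAlgebra.span_nonneg_inter_unitClosedBall fun B hB => ?_
  obtain ⟨hB0 : 0 ≤ B, hB1⟩ := hB
  rw [mem_closedBall_zero_iff, CStarAlgebra.norm_le_one_iff_of_nonneg B hB0] at hB1
  have := LinearMap.congr_fun (hpure.leftSlice_eq_smul hω (nonneg_iff_posSemidef.mp hB0)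
    (nonneg_iff_posSemidef.mp (sub_nonneg.mpr hB1))) A
  simpa [mul_comm] using this

end Slices

/-- If the restriction of a state `ω` on `B(H₁) ⊗ B(H₂)` (finite dimensions, realized
as matrix algebras) to the first factor is pure, then `ω` is a product state. -/
theorem pure_restriction_implies_product
    {k l : ℕ}
    (ω : Matrix (Fin k × Fin l) (Fin k × Fin l) ℂ →ₗ[ℂ] ℂ) (hω : IsState ω)
    (r₁ : Matrix (Fin k) (Fin k) ℂ →ₗ[ℂ] ℂ)
    (hr₁ : ∀ A : Matrix (Fin k) (Fin k) ℂ, r₁ A = ω (A ⊗ₖ (1 : Matrix (Fin l) (Fin l) ℂ)))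
    (hpure : ∀ (φ₁ φ₂ : Matrix (Fin k) (Fin k) ℂ →ₗ[ℂ] ℂ), IsState φ₁ → IsState φ₂ →
      ∀ t : ℝ, 0 < t → t < 1 →
        r₁ = (t : ℂ) • φ₁ + ((1 - t : ℝ) : ℂ) • φ₂ → φ₁ = φ₂) :
    ∀ (A : Matrix (Fin k) (Fin k) ℂ) (B : Matrix (Fin l) (Fin l) ℂ),
      ω (A ⊗ₖ B) = ω (A ⊗ₖ (1 : Matrix (Fin l) (Fin l) ℂ)) *
        ω ((1 : Matrix (Fin k) (Fin k) ℂ) ⊗ₖ B) := by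
  obtain rfl : r₁ = leftSlice ω 1 := LinearMap.ext hr₁
  exact IsPureState.apply_kronecker ⟨hω.leftSlice_one, hpure⟩ hω.2
end

section
/- The von Neumann entropy of the partial trace of a pure state vanishes if and only if the pure state is a product vector: for a unit vector ψ ∈ H₁ ⊗ H₂, S(Tr₂ |ψ⟩⟨ψ|) = 0 if and only if ψ = φ₁ ⊗ φ₂ for unit vectors φᵢ ∈ Hᵢ. -/
open Matrix ComplexOrder

variable {k l : ℕ}

/-- Partial trace over the second factor. -/
noncomputable def trSnd (ρ : Matrix (Fin k × Fin l) (Fin k × Fin l) ℂ) :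
    Matrix (Fin k) (Fin k) ℂ :=
  Matrix.of fun i j => ∑ s : Fin l, ρ (i, s) (j, s)

/-- Von Neumann entropy `S(σ) = -Tr σ log σ`, expressed via eigenvalues. -/
noncomputable def vNEntropy {n : Type*} [Fintype n] [DecidableEq n]
    (σ : Matrix n n ℂ) : ℝ :=
  if h : σ.IsHermitian then -∑ i, h.eigenvalues i * Real.log (h.eigenvalues i) else 0

/-!
Arrange the coefficients of `ψ` in the `k × l` matrix `M = (ψ (i, s))`. Then `Tr₂ |ψ⟩⟨ψ| = M Mᴴ`
is a density matrix of the same rank as `M`. Its eigenvalues lie in `[0, 1]`, where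
`x log x ≤ 0`, so its entropy vanishes exactly when every eigenvalue is `0` or `1`; as they sum
to `1`, this means rank at most one. Finally `M` has rank at most one iff `M = u wᵀ`, i.e.
`ψ = u ⊗ w`, and the factors can be rescaled to unit vectors.
-/

theorem Matrix.exists_eq_vecMulVec_of_rank_le_one {K m n : Type*} [Field K] [Fintype m]
    [Fintype n] {A : Matrix m n K} (hA : A.rank ≤ 1) : ∃ u w, A = vecMulVec u w := by
  rw [rank_eq_finrank_span_cols, Submodule.finrank_le_one_iff_isPrincipal] at hA
  obtain ⟨u, hu⟩ := hA.principal
  have hcol (j : n) : ∃ c : K, c • u = A.col j := by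
    rw [← Submodule.mem_span_singleton, ← hu]
    exact Submodule.subset_span ⟨j, rfl⟩
  choose w hw using hcol
  refine ⟨u, w, ext fun i j => ?_⟩
  rw [vecMulVec_apply, mul_comm, ← col_apply A j i, ← hw j, Pi.smul_apply, smul_eq_mul]

namespace Matrix.PosSemidef

variable {n : Type*} [Fintype n] [DecidableEq n] {A : Matrix n n ℂ}

theorem sum_eigenvalues_eq_one (hA : A.PosSemidef) (htr : A.trace = 1) :
    ∑ i, hA.1.eigenvalues i = 1 := by
  simpa [htr] using congrArg RCLike.re hA.1.trace_eq_sum_eigenvalues.symm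

theorem eigenvalues_le_one (hA : A.PosSemidef) (htr : A.trace = 1) (i : n) :
    hA.1.eigenvalues i ≤ 1 :=
  sum_eigenvalues_eq_one hA htr ▸
    Finset.single_le_sum (fun j _ => hA.eigenvalues_nonneg j) (Finset.mem_univ i)

theorem vNEntropy_eq_zero_iff (hA : A.PosSemidef) (htr : A.trace = 1) :
    vNEntropy A = 0 ↔ ∀ i, hA.1.eigenvalues i = 0 ∨ hA.1.eigenvalues i = 1 := by
  have hterm (i : n) : hA.1.eigenvalues i * Real.log (hA.1.eigenvalues i) ≤ 0 :=
    Real.mul_log_nonpos (hA.eigenvalues_nonneg i) (eigenvalues_le_one hA htr i)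
  rw [vNEntropy, dif_pos hA.1, neg_eq_zero,
    Finset.sum_eq_zero_iff_of_nonpos fun i _ => hterm i]
  refine forall_congr' fun i => ?_
  simp only [Finset.mem_univ, true_implies, mul_eq_zero, Real.log_eq_zero]
  have := hA.eigenvalues_nonneg i
  constructor
  · rintro (h | h | h | h) <;> first | exact Or.inl h | exact Or.inr h | linarith
  · rintro (h | h) <;> simp [h]

theorem rank_le_one_iff (hA : A.PosSemidef) (htr : A.trace = 1) :
    A.rank ≤ 1 ↔ ∀ i, hA.1.eigenvalues i = 0 ∨ hA.1.eigenvalues i = 1 := by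
  rw [hA.1.rank_eq_card_non_zero_eigs]
  constructor
  · intro hcard i
    refine or_iff_not_imp_left.mpr fun hi => ?_
    have hzero (j : n) (hj : j ≠ i) : hA.1.eigenvalues j = 0 := by
      by_contra h
      exact hj (congrArg Subtype.val (Fintype.card_le_one_iff.mp hcard ⟨j, h⟩ ⟨i, hi⟩))
    rw [← sum_eigenvalues_eq_one hA htr,
      Finset.sum_eq_single i (fun j _ hj => hzero j hj) (by simp)]
  · intro h01
    have hsum : ∑ i, hA.1.eigenvalues i = ∑ i, if hA.1.eigenvalues i ≠ 0 then 1 else 0 :=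
      Finset.sum_congr rfl fun i _ => by rcases h01 i with h | h <;> simp [h]
    rw [sum_eigenvalues_eq_one hA htr, Finset.sum_boole] at hsum
    rw [Fintype.card_subtype]
    exact_mod_cast hsum.ge

theorem vNEntropy_eq_zero_iff_rank_le_one (hA : A.PosSemidef) (htr : A.trace = 1) :
    vNEntropy A = 0 ↔ A.rank ≤ 1 :=
  (vNEntropy_eq_zero_iff hA htr).trans (rank_le_one_iff hA htr).symm

end Matrix.PosSemidef

theorem trSnd_vecMulVec_star (ψ : Fin k × Fin l → ℂ) :
    trSnd (vecMulVec ψ (star ψ)) = of (Function.curry ψ) * (of (Function.curry ψ))ᴴ := by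
  ext i j
  simp [trSnd, vecMulVec_apply, mul_apply]

theorem trace_trSnd_vecMulVec_star (ψ : Fin k × Fin l → ℂ) :
    (trSnd (vecMulVec ψ (star ψ))).trace = ((∑ z, ‖ψ z‖ ^ 2 : ℝ) : ℂ) := by
  push_cast
  simp only [trace, diag, trSnd, of_apply, vecMulVec_apply, Pi.star_apply, Complex.star_def,
    Complex.mul_conj', Fintype.sum_prod_type]

theorem of_curry_eq_vecMulVec_iff {m n : Type*} (ψ : m × n → ℂ) (u : m → ℂ) (w : n → ℂ) :
    of (Function.curry ψ) = vecMulVec u w ↔ ψ = fun z => u z.1 * w z.2 := by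
  simp only [← ext_iff, of_apply, Function.curry_apply, vecMulVec_apply, funext_iff,
    Prod.forall]

theorem exists_normalized_product {m n : Type*} [Fintype m] [Fintype n] {u : m → ℂ} {w : n → ℂ}
    (h : ∑ z : m × n, ‖u z.1 * w z.2‖ ^ 2 = 1) :
    ∃ (φ₁ : m → ℂ) (φ₂ : n → ℂ), (∑ i, ‖φ₁ i‖ ^ 2 = 1) ∧ (∑ s, ‖φ₂ s‖ ^ 2 = 1) ∧
      (fun z : m × n => u z.1 * w z.2) = fun z => φ₁ z.1 * φ₂ z.2 := by
  set a := ∑ i, ‖u i‖ ^ 2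
  set b := ∑ s, ‖w s‖ ^ 2
  have hab : a * b = 1 := by
    rw [← h, Fintype.sum_prod_type, Finset.sum_mul_sum]
    simp only [norm_mul, mul_pow]
  have ha : 0 < a := lt_of_le_of_ne (by positivity) (by rintro h0; simp [← h0] at hab)
  set r := Real.sqrt a
  have hr : r ≠ 0 := (Real.sqrt_pos.mpr ha).ne'
  have hr2 : ‖(r : ℂ)‖ ^ 2 = a := by
    rw [Complex.norm_real, Real.norm_eq_abs, sq_abs, Real.sq_sqrt ha.le]
  refine ⟨fun i => (r⁻¹ : ℂ) * u i, fun s => (r : ℂ) * w s, ?_, ?_, ?_⟩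
  · simp only [norm_mul, mul_pow, ← Finset.mul_sum, norm_inv, inv_pow, hr2]
    exact inv_mul_cancel₀ ha.ne'
  · simp only [norm_mul, mul_pow, ← Finset.mul_sum, hr2]
    exact hab
  · funext z
    field_simp

/-- For a unit vector `ψ ∈ H₁ ⊗ H₂`, the entropy of the reduced density matrix
`Tr₂ |ψ⟩⟨ψ|` vanishes iff `ψ` is a product vector. -/
theorem entropy_zero_iff_product
    (ψ : Fin k × Fin l → ℂ) (hψ : ∑ z, ‖ψ z‖ ^ 2 = 1) :
    vNEntropy (trSnd (Matrix.vecMulVec ψ (star ψ))) = 0 ↔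
      ∃ (φ₁ : Fin k → ℂ) (φ₂ : Fin l → ℂ),
        (∑ i, ‖φ₁ i‖ ^ 2 = 1) ∧ (∑ s, ‖φ₂ s‖ ^ 2 = 1) ∧
        ψ = fun z => φ₁ z.1 * φ₂ z.2 := by
  have hσ : (trSnd (vecMulVec ψ (star ψ))).PosSemidef := by
    rw [trSnd_vecMulVec_star]
    exact posSemidef_self_mul_conjTranspose _
  have htr : (trSnd (vecMulVec ψ (star ψ))).trace = 1 := by
    rw [trace_trSnd_vecMulVec_star, hψ, Complex.ofReal_one]
  rw [hσ.vNEntropy_eq_zero_iff_rank_le_one htr, trSnd_vecMulVec_star,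
    rank_self_mul_conjTranspose]
  constructor
  · intro hrank
    obtain ⟨u, w, huw⟩ := exists_eq_vecMulVec_of_rank_le_one hrank
    rw [of_curry_eq_vecMulVec_iff] at huw
    subst huw
    exact exists_normalized_product hψ
  · rintro ⟨φ₁, φ₂, -, -, rfl⟩
    rw [(of_curry_eq_vecMulVec_iff _ φ₁ φ₂).mpr rfl]
    exact rank_vecMulVec_le φ₁ φ₂
end

section
/- (Peres–Horodecki necessity) If ρ is a separable density matrix on H₁ ⊗ H₂ (finite-dimensional), then for every positive (not necessarily completely positive) linear map α : B(H₁) → B(H₁), the operator (α ⊗ id)(ρ) is positive semidefinite. In particular the partial transpose (τ ⊗ id)(ρ) is positive. -/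
/-!
`α ⊗ id` is linear and sends `σ₁ ⊗ σ₂` to `α σ₁ ⊗ σ₂`, a Kronecker product of positive
semidefinite matrices when `α` is positive. Hence it maps a separable state to a nonnegative
combination of positive semidefinite matrices. The partial transpose is the case `α = τ`, and
transposition preserves positivity.
-/

open Matrix ComplexOrder
open scoped Kronecker

variable {k l : ℕ}

/-- A density matrix is separable if it is a convex combination of tensor products of
density matrices. -/
def Separable (ρ : Matrix (Fin k × Fin l) (Fin k × Fin l) ℂ) : Prop :=
  ∃ (n : ℕ) (p : Fin n → ℝ) (σ₁ : Fin n → Matrix (Fin k) (Fin k) ℂ)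
    (σ₂ : Fin n → Matrix (Fin l) (Fin l) ℂ),
    (∀ i, 0 ≤ p i) ∧ (∑ i, p i = 1) ∧
    (∀ i, (σ₁ i).PosSemidef ∧ (σ₁ i).trace = 1) ∧
    (∀ i, (σ₂ i).PosSemidef ∧ (σ₂ i).trace = 1) ∧
    ρ = ∑ i, (p i : ℂ) • (σ₁ i ⊗ₖ σ₂ i)

/-- The amplification `α ⊗ id` of a map on the first tensor factor. -/
def amplFst (α : Matrix (Fin k) (Fin k) ℂ →ₗ[ℂ] Matrix (Fin k) (Fin k) ℂ)
    (ρ : Matrix (Fin k × Fin l) (Fin k × Fin l) ℂ) :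
    Matrix (Fin k × Fin l) (Fin k × Fin l) ℂ :=
  Matrix.of fun p q => α (Matrix.of fun i j => ρ (i, p.2) (j, q.2)) p.1 q.1

/-- The partial transpose: transposition on the first tensor factor. -/
def partialTransposeFst (ρ : Matrix (Fin k × Fin l) (Fin k × Fin l) ℂ) :
    Matrix (Fin k × Fin l) (Fin k × Fin l) ℂ :=
  Matrix.of fun p q => ρ (q.1, p.2) (p.1, q.2)


lemma amplFst_apply (α : Matrix (Fin k) (Fin k) ℂ →ₗ[ℂ] Matrix (Fin k) (Fin k) ℂ)
    (ρ : Matrix (Fin k × Fin l) (Fin k × Fin l) ℂ) (p q : Fin k × Fin l) :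
    amplFst α ρ p q = α (ρ.submatrix (·, p.2) (·, q.2)) p.1 q.1 :=
  rfl

@[simps]
def amplFstLinearMap (α : Matrix (Fin k) (Fin k) ℂ →ₗ[ℂ] Matrix (Fin k) (Fin k) ℂ) :
    Matrix (Fin k × Fin l) (Fin k × Fin l) ℂ →ₗ[ℂ] Matrix (Fin k × Fin l) (Fin k × Fin l) ℂ where
  toFun := amplFst α
  map_add' ρ σ := by
    ext p q
    simp only [amplFst_apply, submatrix_add, Pi.add_apply, map_add, Matrix.add_apply]
  map_smul' c ρ := by
    ext p q
    simp only [amplFst_apply, submatrix_smul, Pi.smul_apply, _root_.map_smul, Matrix.smul_apply,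
      RingHom.id_apply]

lemma kronecker_submatrix_prodMk_right {m n R : Type*} [CommMagma R] (A : Matrix m m R)
    (B : Matrix n n R) (i j : n) :
    (A ⊗ₖ B).submatrix (·, i) (·, j) = B i j • A := by
  ext a b
  simp [mul_comm]

lemma amplFst_kronecker (α : Matrix (Fin k) (Fin k) ℂ →ₗ[ℂ] Matrix (Fin k) (Fin k) ℂ)
    (A : Matrix (Fin k) (Fin k) ℂ) (B : Matrix (Fin l) (Fin l) ℂ) :
    amplFst α (A ⊗ₖ B) = α A ⊗ₖ B := by
  ext p q
  simp [amplFst_apply, kronecker_submatrix_prodMk_right, mul_comm]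

theorem Separable.posSemidef_amplFst {ρ : Matrix (Fin k × Fin l) (Fin k × Fin l) ℂ}
    (hsep : Separable ρ) {α : Matrix (Fin k) (Fin k) ℂ →ₗ[ℂ] Matrix (Fin k) (Fin k) ℂ}
    (hα : ∀ a, a.PosSemidef → (α a).PosSemidef) : (amplFst α ρ).PosSemidef := by
  obtain ⟨n, p, σ₁, σ₂, hp, -, h₁, h₂, rfl⟩ := hsep
  rw [← amplFstLinearMap_apply, map_sum]
  refine posSemidef_sum _ fun i _ => ?_
  rw [_root_.map_smul, amplFstLinearMap_apply, amplFst_kronecker]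
  exact ((hα _ (h₁ i).1).kronecker (h₂ i).1).smul (Complex.zero_le_real.mpr (hp i))

lemma partialTransposeFst_eq_amplFst (ρ : Matrix (Fin k × Fin l) (Fin k × Fin l) ℂ) :
    partialTransposeFst ρ = amplFst (transposeLinearEquiv (Fin k) (Fin k) ℂ ℂ).toLinearMap ρ :=
  rfl

/-- Peres–Horodecki (necessity): a separable density matrix stays positive under
`α ⊗ id` for every positive map `α`; in particular its partial transpose is
positive. -/
theorem separable_positive_under_positive_maps
    (ρ : Matrix (Fin k × Fin l) (Fin k × Fin l) ℂ) (hsep : Separable ρ) :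
    (∀ α : Matrix (Fin k) (Fin k) ℂ →ₗ[ℂ] Matrix (Fin k) (Fin k) ℂ,
      (∀ a : Matrix (Fin k) (Fin k) ℂ, a.PosSemidef → (α a).PosSemidef) →
      (amplFst α ρ).PosSemidef) ∧
    (partialTransposeFst ρ).PosSemidef :=
  ⟨fun _ hα => hsep.posSemidef_amplFst hα,
    partialTransposeFst_eq_amplFst ρ ▸ hsep.posSemidef_amplFst fun _ ha => ha.transpose⟩
end

section
/- Every completely positive map τ : M_n(ℂ) → M_m(ℂ) has a Kraus representation: there exist finitely many matrices V_i ∈ M_{m×n}(ℂ) such that τ(a) = Σᵢ Vᵢ a Vᵢ* for all a; consequently every completely positive map is decomposable and positive. -/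
/-!
Applying `τ ⊗ id_n` to the positive rank-one matrix `ωω*`, where `ω = Σᵢ eᵢ ⊗ eᵢ`, yields the Choi
matrix `C_τ = Σ_{ij} E_{ij} ⊗ τ(E_{ij})`, so complete positivity makes `C_τ` positive semidefinite.
Writing `C_τ = Σₖ vₖ vₖ*` and reading each `vₖ ∈ ℂᵐ ⊗ ℂⁿ` as an `m × n` matrix `Vₖ` gives
`τ(E_{ij}) = Σₖ Vₖ E_{ij} Vₖ*`, hence the Kraus form by linearity. Maps of Kraus form are positive,
and `τ = τ + 0 ∘ transpose` is a decomposition.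
-/

open Matrix ComplexOrder

/-- The amplification `τ ⊗ id_r` of a linear map on matrix algebras. -/
def ampl {n m r : ℕ}
    (τ : Matrix (Fin n) (Fin n) ℂ →ₗ[ℂ] Matrix (Fin m) (Fin m) ℂ)
    (ρ : Matrix (Fin n × Fin r) (Fin n × Fin r) ℂ) :
    Matrix (Fin m × Fin r) (Fin m × Fin r) ℂ :=
  Matrix.of fun p q => τ (Matrix.of fun i j => ρ (i, p.2) (j, q.2)) p.1 q.1

/-- Complete positivity of a linear map between matrix algebras: all amplifications
preserve positive semidefiniteness. -/
def IsCP {n m : ℕ}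
    (τ : Matrix (Fin n) (Fin n) ℂ →ₗ[ℂ] Matrix (Fin m) (Fin m) ℂ) : Prop :=
  ∀ (r : ℕ) (ρ : Matrix (Fin n × Fin r) (Fin n × Fin r) ℂ),
    ρ.PosSemidef → (ampl τ ρ).PosSemidef

/-- The transposition map as a linear map on `M_n(ℂ)`. -/
def transposeMap {n : ℕ} : Matrix (Fin n) (Fin n) ℂ →ₗ[ℂ] Matrix (Fin n) (Fin n) ℂ where
  toFun a := aᵀ
  map_add' a b := Matrix.transpose_add a b
  map_smul' c a := Matrix.transpose_smul c a

section Choi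

variable {R : Type*} [CommSemiring R] {m n : Type*} [Fintype n] [DecidableEq n]

theorem LinearMap.apply_eq_sum_smul_single (τ : Matrix n n R →ₗ[R] Matrix m m R)
    (a : Matrix n n R) : τ a = ∑ i, ∑ j, a i j • τ (Matrix.single i j 1) := by
  conv_lhs => rw [matrix_eq_sum_single a]
  simp only [map_sum, ← map_smul, smul_single, smul_eq_mul, mul_one]

/-- The Choi matrix `Σ_{ij} E_{ij} ⊗ τ(E_{ij})`, with the output index first, as in `ampl`. -/
def choiMatrix (τ : Matrix n n R →ₗ[R] Matrix m m R) : Matrix (m × n) (m × n) R :=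
  of fun p q => τ (Matrix.single p.2 q.2 1) p.1 q.1

theorem eq_sum_mul_mul_conjTranspose_of_choiMatrix_eq [StarRing R]
    (τ : Matrix n n R →ₗ[R] Matrix m m R) {ι : Type*} [Fintype ι] (v : ι → m × n → R)
    (hv : choiMatrix τ = ∑ k, vecMulVec (v k) (star (v k))) (a : Matrix n n R) :
    τ a = ∑ k, of (fun p i => v k (p, i)) * a * (of fun p i => v k (p, i))ᴴ := by
  ext p q
  have hchoi (i j : n) : τ (Matrix.single i j 1) p q = ∑ k, v k (p, i) * star (v k (q, j)) := by
    simpa [choiMatrix, Matrix.sum_apply, vecMulVec_apply] using congrFun₂ hv (p, i) (q, j)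
  rw [τ.apply_eq_sum_smul_single a]
  simp only [Matrix.sum_apply, Matrix.smul_apply, smul_eq_mul, hchoi, mul_apply,
    conjTranspose_apply, of_apply, Finset.mul_sum, Finset.sum_mul]
  conv_lhs => enter [2, i]; rw [Finset.sum_comm]
  rw [Finset.sum_comm]
  refine Finset.sum_congr rfl fun k _ => ?_
  rw [Finset.sum_comm]
  exact Finset.sum_congr rfl fun j _ => Finset.sum_congr rfl fun i _ => by ring

end Choi

theorem Matrix.posSemidef_sum_mul_mul_conjTranspose {𝕜 : Type*} [RCLike 𝕜] {m n ι : Type*}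
    [Fintype m] [Fintype n] [Fintype ι] {a : Matrix n n 𝕜} (ha : a.PosSemidef)
    (V : ι → Matrix m n 𝕜) :
    (∑ i, V i * a * (V i)ᴴ).PosSemidef :=
  posSemidef_sum _ fun i _ => ha.mul_mul_conjTranspose_same (V i)

/-- The unnormalised maximally entangled vector `Σᵢ eᵢ ⊗ eᵢ`. -/
def maxEntangledVec (n : ℕ) : Fin n × Fin n → ℂ :=
  fun p => (1 : Matrix (Fin n) (Fin n) ℂ) p.1 p.2

theorem ampl_vecMulVec_maxEntangledVec {n m : ℕ}
    (τ : Matrix (Fin n) (Fin n) ℂ →ₗ[ℂ] Matrix (Fin m) (Fin m) ℂ) :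
    ampl τ (vecMulVec (maxEntangledVec n) (star (maxEntangledVec n))) = choiMatrix τ := by
  ext p q
  simp only [ampl, choiMatrix, of_apply]
  refine congrArg (fun b => τ b p.1 q.1) ?_
  ext i j
  simp [maxEntangledVec, vecMulVec_apply, one_apply, Matrix.single_apply, eq_comm, ite_and]
  split_ifs <;> rfl

theorem IsCP.posSemidef_choiMatrix {n m : ℕ}
    {τ : Matrix (Fin n) (Fin n) ℂ →ₗ[ℂ] Matrix (Fin m) (Fin m) ℂ} (hτ : IsCP τ) :
    (choiMatrix τ).PosSemidef :=
  ampl_vecMulVec_maxEntangledVec τ ▸ hτ n _ (posSemidef_vecMulVec_self_star _)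

theorem IsCP.exists_kraus {n m : ℕ}
    {τ : Matrix (Fin n) (Fin n) ℂ →ₗ[ℂ] Matrix (Fin m) (Fin m) ℂ} (hτ : IsCP τ) :
    ∃ (N : ℕ) (V : Fin N → Matrix (Fin m) (Fin n) ℂ),
      ∀ a : Matrix (Fin n) (Fin n) ℂ, τ a = ∑ i, V i * a * (V i)ᴴ := by
  obtain ⟨N, v, hv⟩ := posSemidef_iff_eq_sum_vecMulVec.mp hτ.posSemidef_choiMatrix
  exact ⟨N, _, eq_sum_mul_mul_conjTranspose_of_choiMatrix_eq τ v hv⟩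

theorem isCP_zero {n m : ℕ} : IsCP (0 : Matrix (Fin n) (Fin n) ℂ →ₗ[ℂ] Matrix (Fin m) (Fin m) ℂ) :=
  fun _ _ _ => by
    convert PosSemidef.zero
    ext
    simp [ampl]

/-- Choi–Kraus: every completely positive map `τ : M_n(ℂ) → M_m(ℂ)` has a Kraus
representation `τ(a) = Σᵢ Vᵢ a Vᵢ*`; consequently it is decomposable and positive. -/
theorem kraus_representation {n m : ℕ}
    (τ : Matrix (Fin n) (Fin n) ℂ →ₗ[ℂ] Matrix (Fin m) (Fin m) ℂ)
    (hτ : IsCP τ) :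
    (∃ (N : ℕ) (V : Fin N → Matrix (Fin m) (Fin n) ℂ),
      ∀ a : Matrix (Fin n) (Fin n) ℂ, τ a = ∑ i, V i * a * (V i)ᴴ) ∧
    (∃ τ₁ τ₂ : Matrix (Fin n) (Fin n) ℂ →ₗ[ℂ] Matrix (Fin m) (Fin m) ℂ,
      IsCP τ₁ ∧ IsCP τ₂ ∧ τ = τ₁ + τ₂ ∘ₗ transposeMap) ∧
    (∀ a : Matrix (Fin n) (Fin n) ℂ, a.PosSemidef → (τ a).PosSemidef) := by
  obtain ⟨N, V, hV⟩ := hτ.exists_kraus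
  refine ⟨⟨N, V, hV⟩, ⟨τ, 0, hτ, isCP_zero, by simp⟩, fun a ha => ?_⟩
  rw [hV a]
  exact posSemidef_sum_mul_mul_conjTranspose ha V
end
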